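/- Let N ≥ 1 and n ≥ 0 be natural numbers and let F, G ∈ ℚ⟦X⟧ be such that (1 − X^N)^{n+1} · F and (1 − X^N)^{n+1} · G are both polynomials of degree < N(n+1). If limsup_{t→∞} |{k ∈ ℕ : k ≤ t and coeff_k F ≠ coeff_k G}| / t < 1/N, then F = G. (The power-series form of Corollary 1.4 of the paper: a strong multiplicity one theorem allowing an exceptional set of density less than 1/N.) -/

import Mathlib

/-!
Put `H = F - G`. Multiplying by `(1 - X^N)^(n+1)` takes `n+1` forward differences along each
residue class modulo `N`: the coefficient of `X^(j + (m+n+1)N)` in `(1 - X^N)^(n+1) H` is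
`Δ^(n+1)` of `i ↦ coeff (j + iN) H` at `m`. As this product is a polynomial of degree
`< N(n+1)`, these differences vanish, so on each residue class the coefficients of `H` are the
values of a polynomial in `i`. If `H ≠ 0`, one of these polynomials is nonzero, so `F` and `G`
differ on all but finitely many terms of an arithmetic progression of difference `N`, a set of
density `1/N`.
-/

open Filter Finset fwdDiff

section FwdDiff

theorem fwdDiff_iter_sub {M G : Type*} [AddCommMonoid M] [AddCommGroup G] (h : M) (f g : M → G)
    (n : ℕ) : Δ_[h] ^[n] (f - g) = Δ_[h] ^[n] f - Δ_[h] ^[n] g := funext fun y => by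
  simp [fwdDiff_iter_eq_sum_shift, smul_sub]

theorem eq_zero_of_fwdDiff_iter_eq_zero {G : Type*} [AddCommGroup G] {n : ℕ} {c : ℕ → G}
    (hc : Δ_[1] ^[n + 1] c = 0) (hc₀ : ∀ m ≤ n, c m = 0) : c = 0 := by
  suffices ∀ m, c m = 0 from funext this
  intro m
  induction m using Nat.strong_induction_on with
  | _ m ih =>
    obtain hm | ⟨m, rfl⟩ : m ≤ n ∨ ∃ m', m = m' + (n + 1) :=
      (le_or_gt m n).imp_right fun h => ⟨m - (n + 1), by omega⟩
    · exact hc₀ m hm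
    -- only the last term `c (m + n + 1)` of the expansion of `Δ^[n+1] c m` survives
    have h := congr_fun hc m
    rw [fwdDiff_iter_eq_sum_shift, sum_range_succ,
      sum_eq_zero fun k hk => by rw [ih _ (by simp at hk ⊢; omega), smul_zero]] at h
    simpa using h

open Polynomial

theorem fwdDiff_iter_eval_natCast {R : Type*} [CommRing R] (P : R[X]) (k m : ℕ) :
    Δ_[1] ^[k] (fun i : ℕ => P.eval (i : R)) m = Δ_[1] ^[k] P.eval (m : R) := by
  simp [fwdDiff_iter_eq_sum_shift]

theorem exists_eval_eq_of_fwdDiff_iter_eq_zero {K : Type*} [Field K] [CharZero K] {n : ℕ}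
    {a : ℕ → K} (ha : Δ_[1] ^[n + 1] a = 0) : ∃ P : K[X], ∀ m : ℕ, a m = P.eval (m : K) := by
  have hinj : Set.InjOn (Nat.cast : ℕ → K) (range (n + 1)) := Nat.cast_injective.injOn
  set P := Lagrange.interpolate (range (n + 1)) (Nat.cast : ℕ → K) a
  have hP : P.natDegree < n + 1 := by
    have hdeg := Lagrange.degree_interpolate_lt a hinj
    rw [card_range] at hdeg
    exact Nat.lt_succ_of_le (natDegree_le_iff_degree_le.2 (Order.le_of_lt_succ hdeg))
  have hPn : Δ_[1] ^[n + 1] (fun i : ℕ => P.eval (i : K)) = 0 := funext fun m => by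
    rw [fwdDiff_iter_eval_natCast, fwdDiff_iter_eq_zero_of_degree_lt hP]; rfl
  have hdiff := eq_zero_of_fwdDiff_iter_eq_zero (c := a - fun i : ℕ => P.eval (i : K))
    (by rw [fwdDiff_iter_sub, ha, hPn, sub_zero]) fun i hi => by
      simp only [Pi.sub_apply, P, Lagrange.eval_interpolate_at_node a hinj
        (mem_range.mpr (Nat.lt_succ_of_le hi)), sub_self]
  exact ⟨P, fun m => sub_eq_zero.mp (congr_fun hdiff m)⟩

theorem eventually_ne_zero_of_fwdDiff_iter_eq_zero {K : Type*} [Field K] [CharZero K] {n : ℕ}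
    {a : ℕ → K} (ha : Δ_[1] ^[n + 1] a = 0) (ha₀ : a ≠ 0) : ∀ᶠ m in atTop, a m ≠ 0 := by
  obtain ⟨P, hP⟩ := exists_eval_eq_of_fwdDiff_iter_eq_zero ha
  have hP₀ : P ≠ 0 := by
    rintro rfl
    exact ha₀ (funext fun m => by simp [hP m])
  have hfin : {m : ℕ | a m = 0}.Finite :=
    ((P.rootSet K).toFinite.preimage Nat.cast_injective.injOn).subset fun m hm => by
      simp_all [mem_rootSet]
  rw [← Nat.cofinite_eq_atTop]
  exact hfin.compl_mem_cofinite

end FwdDiff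

namespace PowerSeries

variable {R : Type*} [CommRing R]

theorem coeff_one_sub_X_pow_pow_mul (N j k m : ℕ) (H : R⟦X⟧) :
    coeff (j + (m + k) * N) ((1 - X ^ N) ^ k * H) =
      Δ_[1] ^[k] (fun i => coeff (j + i * N) H) m := by
  induction k generalizing m with
  | zero => simp
  | succ k ih =>
    rw [Function.iterate_succ_apply', fwdDiff, ← ih, ← ih, pow_succ', mul_assoc, sub_mul, one_mul,
      show j + (m + (k + 1)) * N = j + (m + k) * N + N by ring, map_sub, coeff_X_pow_mul,
      show j + (m + k) * N + N = j + (m + 1 + k) * N by ring]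

theorem fwdDiff_iter_coeff_eq_zero_of_mul_eq_polynomial {N k : ℕ} {H : R⟦X⟧} {r : Polynomial R}
    (hr : r.degree < (N * k : ℕ)) (hH : (1 - X ^ N) ^ k * H = (r : R⟦X⟧)) (j : ℕ) :
    Δ_[1] ^[k] (fun i => coeff (j + i * N) H) = 0 := funext fun m => by
  rw [← coeff_one_sub_X_pow_pow_mul, hH, Polynomial.coeff_coe]
  refine Polynomial.coeff_eq_zero_of_degree_lt (hr.trans_le ?_)
  exact_mod_cast (show N * k ≤ j + (m + k) * N by nlinarith)

end PowerSeries

section Density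

theorem natCard_setOf_le_and_le_succ (p : ℕ → Prop) (t : ℕ) :
    Nat.card {k : ℕ | k ≤ t ∧ p k} ≤ t + 1 := by
  rw [Nat.card_coe_set_eq]
  calc {k : ℕ | k ≤ t ∧ p k}.ncard ≤ (Set.Iic t).ncard :=
        Set.ncard_le_ncard (fun k hk => hk.1) (Set.finite_Iic t)
    _ = t + 1 := by simp

theorem sub_le_natCard_setOf_le_and {p : ℕ → Prop} {N j M : ℕ} (hN : 0 < N) (hp : ∀ m ≥ M, p (j + m * N))
    (t : ℕ) : ((t : ℝ) - j) / N - M ≤ Nat.card {k : ℕ | k ≤ t ∧ p k} := by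
  rcases lt_or_ge t j with htj | hjt
  · have : ((t : ℝ) - j) / N ≤ 0 :=
      div_nonpos_of_nonpos_of_nonneg (by simpa using htj.le) (Nat.cast_nonneg N)
    linarith [(Nat.cast_nonneg _ : (0 : ℝ) ≤ Nat.card {k : ℕ | k ≤ t ∧ p k})]
  set v := (t - j) / N
  have hsub : ((Icc M v).image fun m => j + m * N : Set ℕ) ⊆ {k : ℕ | k ≤ t ∧ p k} := by
    simp only [coe_image, coe_Icc, Set.image_subset_iff]
    intro m ⟨hMm, hmv⟩
    have := (Nat.le_div_iff_mul_le hN).1 hmv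
    exact ⟨by dsimp only; omega, hp m hMm⟩
  have hcard : v + 1 - M ≤ Nat.card {k : ℕ | k ≤ t ∧ p k} := by
    rw [Nat.card_coe_set_eq]
    have := Set.ncard_le_ncard hsub ((Set.finite_Iic t).subset fun k hk => hk.1)
    rwa [Set.ncard_coe_finset, card_image_of_injective _ fun x y hxy =>
      Nat.eq_of_mul_eq_mul_right hN (by omega), Nat.card_Icc] at this
  have hv : ((t : ℝ) - j) / N < v + 1 := by
    have := Nat.lt_floor_add_one (((t - j : ℕ) : ℝ) / N)
    rwa [Nat.floor_div_eq_div, Nat.cast_sub hjt] at this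
  have hvM : (v : ℝ) + 1 ≤ ((v + 1 - M : ℕ) : ℝ) + M := by exact_mod_cast le_tsub_add
  have hcardR : ((v + 1 - M : ℕ) : ℝ) ≤ Nat.card {k : ℕ | k ≤ t ∧ p k} := by exact_mod_cast hcard
  linarith

theorem isBoundedUnder_le_natCard_setOf_le_and_div (p : ℕ → Prop) :
    IsBoundedUnder (· ≤ ·) atTop fun t : ℕ => (Nat.card {k : ℕ | k ≤ t ∧ p k} : ℝ) / t := by
  refine isBoundedUnder_of ⟨2, fun t => ?_⟩
  rcases t.eq_zero_or_pos with rfl | ht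
  · simp
  have hcard : (Nat.card {k : ℕ | k ≤ t ∧ p k} : ℝ) ≤ t + 1 := by
    exact_mod_cast natCard_setOf_le_and_le_succ p t
  have ht' : (1 : ℝ) ≤ t := by exact_mod_cast ht
  rw [div_le_iff₀ (by positivity)]
  linarith

theorem one_div_le_limsup_natCard_setOf_le_and_div {p : ℕ → Prop} {N j M : ℕ} (hN : 0 < N)
    (hp : ∀ m ≥ M, p (j + m * N)) :
    1 / (N : ℝ) ≤ limsup (fun t : ℕ => (Nat.card {k : ℕ | k ≤ t ∧ p k} : ℝ) / t) atTop := by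
  set C : ℝ := j / N + M
  have hlim : Tendsto (fun t : ℕ => 1 / (N : ℝ) - C / t) atTop (nhds (1 / N)) := by
    simpa using tendsto_const_nhds.sub (tendsto_const_div_atTop_nhds_zero_nat C)
  rw [← hlim.limsup_eq]
  refine limsup_le_limsup ?_ hlim.isCoboundedUnder_le
    (isBoundedUnder_le_natCard_setOf_le_and_div p)
  filter_upwards [eventually_gt_atTop 0] with t ht
  have hN' : (N : ℝ) ≠ 0 := by positivity
  rw [show 1 / (N : ℝ) - C / t = (((t : ℝ) - j) / N - M) / t by simp only [C]; field_simp; ring]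
  gcongr
  exact sub_le_natCard_setOf_le_and hN hp t

end Density

theorem strong_multiplicity_one_series (N n : ℕ) (hN : 1 ≤ N)
    (F G : PowerSeries ℚ)
    (hF : ∃ p : Polynomial ℚ, p.degree < (N * (n + 1) : ℕ) ∧
      (1 - PowerSeries.X ^ N) ^ (n + 1) * F = (p : PowerSeries ℚ))
    (hG : ∃ q : Polynomial ℚ, q.degree < (N * (n + 1) : ℕ) ∧
      (1 - PowerSeries.X ^ N) ^ (n + 1) * G = (q : PowerSeries ℚ))
    (h : Filter.limsup
        (fun t : ℕ =>
          (Nat.card {k : ℕ | k ≤ t ∧ PowerSeries.coeff k F ≠ PowerSeries.coeff k G} : ℝ) / t)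
        Filter.atTop < 1 / N) :
    F = G := by
  obtain ⟨p, hp, hFp⟩ := hF
  obtain ⟨q, hq, hGq⟩ := hG
  by_contra hne
  obtain ⟨k₀, hk₀⟩ : ∃ k, PowerSeries.coeff k (F - G) ≠ 0 := by
    by_contra! h₀
    exact hne (sub_eq_zero.1 (PowerSeries.ext fun k => by simpa using h₀ k))
  set a : ℕ → ℚ := fun i => PowerSeries.coeff (k₀ % N + i * N) (F - G)
  have ha : Δ_[1] ^[n + 1] a = 0 :=
    PowerSeries.fwdDiff_iter_coeff_eq_zero_of_mul_eq_polynomial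
      ((Polynomial.degree_sub_le p q).trans_lt (max_lt hp hq))
      (by rw [mul_sub, hFp, hGq, Polynomial.coe_sub]) _
  have ha₀ : a ≠ 0 := fun h₀ => hk₀ (by simpa [a, Nat.mod_add_div'] using congr_fun h₀ (k₀ / N))
  obtain ⟨M, hM⟩ := eventually_atTop.1 (eventually_ne_zero_of_fwdDiff_iter_eq_zero ha ha₀)
  exact absurd h <| not_lt.2 <| one_div_le_limsup_natCard_setOf_le_and_div hN fun m hm => by
    simpa [a, sub_eq_zero] using hM m hm
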